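/- arXiv:1512.00311 — 5 statements merged into one kernel-verified Lean document; each statement's English description precedes it below -/
import Mathlib

section
/- If A is a real skew-symmetric n×n matrix and b ∈ ℝⁿ, then the Krylov subspaces K_s(A², Ab) = span{Ab, A³b, ..., A^{2s-1}b} and K_t(A², b) = span{b, A²b, ..., A^{2t-2}b} are orthogonal subspaces of ℝⁿ, for any s, t ≥ 0. -/
/-! Odd powers of a skew-symmetric matrix are skew-symmetric and even powers are symmetric,
so `⟪A ^ p b, A ^ q b⟫ = ⟪A ^ (q + p) b, b⟫`, which vanishes when `p` is odd and `q` even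
because the quadratic form of a skew-symmetric matrix is zero. Bilinearity of the dot product
passes this orthogonality from the generators to their spans. -/

open Matrix

def krylov {n : ℕ} (M : Matrix (Fin n) (Fin n) ℝ) (v : Fin n → ℝ) (m : ℕ) :
    Submodule ℝ (Fin n → ℝ) :=
  Submodule.span ℝ ((fun k => (M ^ k) *ᵥ v) '' Set.Iio m)

noncomputable def enorm {n : ℕ} (v : Fin n → ℝ) : ℝ := Real.sqrt (∑ i, v i ^ 2)

namespace Matrix

variable {m R : Type*} [Fintype m] [DecidableEq m]

theorem transpose_pow_of_transpose_eq_neg_of_odd [CommRing R] {A : Matrix m m R} (hA : Aᵀ = -A)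
    {p : ℕ} (hp : Odd p) : (A ^ p)ᵀ = -A ^ p := by
  rw [transpose_pow, hA, hp.neg_pow]

theorem transpose_pow_of_transpose_eq_neg_of_even [CommRing R] {A : Matrix m m R} (hA : Aᵀ = -A)
    {q : ℕ} (hq : Even q) : (A ^ q)ᵀ = A ^ q := by
  rw [transpose_pow, hA, hq.neg_pow]

omit [DecidableEq m] in
theorem dotProduct_mulVec_self_eq_zero_of_transpose_eq_neg [CommRing R] [IsAddTorsionFree R]
    {M : Matrix m m R} (hM : Mᵀ = -M) (x : m → R) : x ⬝ᵥ (M *ᵥ x) = 0 := by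
  refine self_eq_neg.1 ?_
  calc x ⬝ᵥ (M *ᵥ x) = (Mᵀ *ᵥ x) ⬝ᵥ x := by rw [dotProduct_mulVec, mulVec_transpose]
    _ = -(x ⬝ᵥ (M *ᵥ x)) := by rw [hM, neg_mulVec, neg_dotProduct, dotProduct_comm]

theorem pow_mulVec_dotProduct_pow_mulVec_eq_zero_of_transpose_eq_neg [CommRing R]
    [IsAddTorsionFree R] {A : Matrix m m R} (hA : Aᵀ = -A) {p q : ℕ} (hp : Odd p) (hq : Even q)
    (b : m → R) : (A ^ p *ᵥ b) ⬝ᵥ (A ^ q *ᵥ b) = 0 := by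
  rw [dotProduct_mulVec, ← mulVec_transpose, transpose_pow_of_transpose_eq_neg_of_even hA hq,
    mulVec_mulVec, ← pow_add, dotProduct_comm]
  exact dotProduct_mulVec_self_eq_zero_of_transpose_eq_neg
    (transpose_pow_of_transpose_eq_neg_of_odd hA (hq.add_odd hp)) b

omit [DecidableEq m] in
theorem dotProduct_eq_zero_of_mem_span [CommSemiring R] {s t : Set (m → R)}
    (h : ∀ x ∈ s, ∀ y ∈ t, x ⬝ᵥ y = 0) {u v : m → R} (hu : u ∈ Submodule.span R s)
    (hv : v ∈ Submodule.span R t) : u ⬝ᵥ v = 0 := by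
  have hspan :
      Submodule.map₂ (dotProductBilin R R) (Submodule.span R s) (Submodule.span R t) ≤ ⊥ := by
    rw [Submodule.map₂_span_span, Submodule.span_le]
    rintro _ ⟨x, hx, y, hy, rfl⟩
    exact h x hx y hy
  exact Submodule.map₂_le.1 hspan u hu v hv

end Matrix

theorem krylov_odd_even_orthogonal {n : ℕ} (A : Matrix (Fin n) (Fin n) ℝ)
    (hA : Aᵀ = -A) (b : Fin n → ℝ) (s t : ℕ) :
    ∀ u ∈ krylov (A ^ 2) (A *ᵥ b) s, ∀ v ∈ krylov (A ^ 2) b t, u ⬝ᵥ v = 0 := by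
  intro u hu v hv
  refine dotProduct_eq_zero_of_mem_span ?_ hu hv
  rintro _ ⟨k, -, rfl⟩ _ ⟨j, -, rfl⟩
  simp only [mulVec_mulVec, ← pow_mul, ← pow_succ]
  exact pow_mulVec_dotProduct_pow_mulVec_eq_zero_of_transpose_eq_neg hA
    (odd_two_mul_add_one k) (even_two_mul j) b
end

section
/- If A is a real skew-symmetric nonsingular n×n matrix and x solves Ax = b, then x is orthogonal to the Krylov subspace K_t(A², b) = span{b, A²b, ..., A^{2t-2}b} for any t ≥ 0. -/
/-!
Writing `b = A x`, the generators of `K_t(A², b)` are `A^(2k+1) x`. Odd powers of a skew-symmetric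
matrix are skew-symmetric, and the quadratic form of a skew-symmetric matrix vanishes, so
`x ⬝ A^(2k+1) x = 0` for every `k`.
-/

open Matrix

namespace Matrix

variable {ι R : Type*} [Fintype ι] [CommRing R]

theorem transpose_pow_odd_of_transpose_eq_neg [DecidableEq ι] {A : Matrix ι ι R} (hA : Aᵀ = -A)
    (k : ℕ) : (A ^ (2 * k + 1))ᵀ = -A ^ (2 * k + 1) := by
  rw [transpose_pow, hA, Odd.neg_pow (odd_two_mul_add_one k)]

theorem dotProduct_mulVec_self_of_transpose_eq_neg [IsAddTorsionFree R] {A : Matrix ι ι R}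
    (hA : Aᵀ = -A) (x : ι → R) : x ⬝ᵥ A *ᵥ x = 0 := by
  refine self_eq_neg.mp ?_
  calc x ⬝ᵥ A *ᵥ x = Aᵀ *ᵥ x ⬝ᵥ x := by rw [dotProduct_mulVec, mulVec_transpose]
    _ = -(x ⬝ᵥ A *ᵥ x) := by rw [hA, neg_mulVec, neg_dotProduct, dotProduct_comm]

end Matrix

theorem krylov_le_iff {n : ℕ} {M : Matrix (Fin n) (Fin n) ℝ} {v : Fin n → ℝ} {m : ℕ}
    {p : Submodule ℝ (Fin n → ℝ)} : krylov M v m ≤ p ↔ ∀ k < m, M ^ k *ᵥ v ∈ p := by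
  simp only [krylov, Submodule.span_le, Set.image_subset_iff]
  rfl

theorem solution_orthogonal_even_krylov_general {n : ℕ} (A : Matrix (Fin n) (Fin n) ℝ)
    (hA : Aᵀ = -A) (b x : Fin n → ℝ) (hx : A *ᵥ x = b) (t : ℕ) :
    ∀ v ∈ krylov (A ^ 2) b t, x ⬝ᵥ v = 0 := by
  have hle : krylov (A ^ 2) b t ≤ LinearMap.ker (dotProductBilin ℝ ℝ x) := by
    refine krylov_le_iff.mpr fun k _ => ?_
    rw [LinearMap.mem_ker, dotProductBilin_apply_apply, ← hx, mulVec_mulVec, ← pow_mul,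
      ← pow_succ]
    exact dotProduct_mulVec_self_of_transpose_eq_neg (transpose_pow_odd_of_transpose_eq_neg hA k) x
  exact fun v hv => hle hv

theorem solution_orthogonal_even_krylov {n : ℕ} (A : Matrix (Fin n) (Fin n) ℝ)
    (hA : Aᵀ = -A) (hdet : A.det ≠ 0) (b x : Fin n → ℝ) (hx : A *ᵥ x = b) (t : ℕ) :
    ∀ v ∈ krylov (A ^ 2) b t, x ⬝ᵥ v = 0 :=
  solution_orthogonal_even_krylov_general A hA b x hx t
end

section
/- If A is real skew-symmetric and x^E ∈ K_q(A², Ab) satisfies pᵀ(b - Ax^E) = 0 for all p ∈ K_q(A², b), then in fact pᵀ(b - Ax^E) = 0 for all p in the larger Krylov subspace K_{2q}(A, b). That is, the CGNE iterate satisfies the Galerkin condition on K_{2q}(A, b). -/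
/-! For skew-symmetric `A` the Gram entries `(Aⁱb)ᵀ(Aʲb)` vanish whenever `i + j` is odd, so
`K_{2q}(A, b)` splits orthogonally into its even part `K_q(A², b)` and its odd part
`K_q(A², Ab)`. The residual is orthogonal to the even part by hypothesis. For an odd vector
`p = A^{2j+1} b`, the term `pᵀb` vanishes by parity and `pᵀ(A xᴱ) = -(A^{2j+2} b)ᵀ xᴱ` vanishes
because `xᴱ` lies in the odd part. -/

open Matrix

namespace Matrix

variable {ι R : Type*} [Fintype ι] [CommRing R] {A : Matrix ι ι R}

theorem dotProduct_mulVec_of_transpose_eq_neg (hA : Aᵀ = -A) (u v : ι → R) :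
    u ⬝ᵥ (A *ᵥ v) = -((A *ᵥ u) ⬝ᵥ v) := by
  rw [dotProduct_mulVec, ← mulVec_transpose, hA, neg_mulVec, neg_dotProduct]

theorem dotProduct_mulVec_self_eq_zero_of_transpose_eq_neg_s6 [IsAddTorsionFree R]
    (hA : Aᵀ = -A) (v : ι → R) : v ⬝ᵥ (A *ᵥ v) = 0 := by
  have h := dotProduct_mulVec_of_transpose_eq_neg hA v v
  rw [dotProduct_comm (A *ᵥ v)] at h
  exact self_eq_neg.mp h

variable [DecidableEq ι]

theorem transpose_pow_eq_neg_of_odd (hA : Aᵀ = -A) {m : ℕ} (hm : Odd m) :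
    (A ^ m)ᵀ = -(A ^ m) := by
  rw [transpose_pow, hA, hm.neg_pow]

theorem pow_mulVec_dotProduct_pow_mulVec_eq_zero_of_odd [IsAddTorsionFree R]
    (hA : Aᵀ = -A) (v : ι → R) {i j : ℕ} (hij : Odd (i + j)) :
    (A ^ i *ᵥ v) ⬝ᵥ (A ^ j *ᵥ v) = 0 := by
  have hv : v ⬝ᵥ (A ^ (i + j) *ᵥ v) = 0 :=
    dotProduct_mulVec_self_eq_zero_of_transpose_eq_neg_s6 (transpose_pow_eq_neg_of_odd hA hij) v
  rw [← vecMul_transpose, ← dotProduct_mulVec, mulVec_mulVec, transpose_pow, hA]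
  rcases Nat.even_or_odd i with hi | hi
  · rw [hi.neg_pow, ← pow_add, hv]
  · rw [hi.neg_pow, Matrix.neg_mul, neg_mulVec, dotProduct_neg, ← pow_add, hv, neg_zero]

end Matrix

section Krylov

variable {n : ℕ}

theorem pow_mulVec_mem_krylov (M : Matrix (Fin n) (Fin n) ℝ) (v : Fin n → ℝ) {k m : ℕ}
    (hk : k < m) : M ^ k *ᵥ v ∈ krylov M v m :=
  Submodule.subset_span ⟨k, hk, rfl⟩

theorem dotProduct_eq_zero_of_mem_krylov {M : Matrix (Fin n) (Fin n) ℝ} {v w : Fin n → ℝ}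
    {m : ℕ} (h : ∀ k < m, (M ^ k *ᵥ v) ⬝ᵥ w = 0) {p : Fin n → ℝ} (hp : p ∈ krylov M v m) :
    p ⬝ᵥ w = 0 := by
  induction hp using Submodule.span_induction with
  | mem p hp =>
    obtain ⟨k, hk, rfl⟩ := hp
    exact h k hk
  | zero => exact zero_dotProduct w
  | add x y _ _ hx hy => rw [add_dotProduct, hx, hy, add_zero]
  | smul c x _ hx => rw [smul_dotProduct, hx, smul_zero]

theorem pow_even_mulVec_dotProduct_eq_zero_of_mem_krylov_sq {A : Matrix (Fin n) (Fin n) ℝ}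
    (hA : Aᵀ = -A) {v x : Fin n → ℝ} {q : ℕ} (hx : x ∈ krylov (A ^ 2) (A *ᵥ v) q) (m : ℕ) :
    (A ^ (2 * m) *ᵥ v) ⬝ᵥ x = 0 := by
  rw [dotProduct_comm]
  refine dotProduct_eq_zero_of_mem_krylov (fun i _ => ?_) hx
  rw [mulVec_mulVec, ← pow_mul, ← pow_succ]
  refine pow_mulVec_dotProduct_pow_mulVec_eq_zero_of_odd hA v ?_
  exact ⟨i + m, by ring⟩

end Krylov

theorem cgne_galerkin_extends {n : ℕ} (A : Matrix (Fin n) (Fin n) ℝ)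
    (hA : Aᵀ = -A) (b xE : Fin n → ℝ) (q : ℕ)
    (hxE : xE ∈ krylov (A ^ 2) (A *ᵥ b) q)
    (horth : ∀ p ∈ krylov (A ^ 2) b q, p ⬝ᵥ (b - A *ᵥ xE) = 0) :
    ∀ p ∈ krylov A b (2 * q), p ⬝ᵥ (b - A *ᵥ xE) = 0 := by
  intro p hp
  refine dotProduct_eq_zero_of_mem_krylov (fun k hk => ?_) hp
  obtain ⟨j, rfl | rfl⟩ := Nat.even_or_odd' k
  · rw [pow_mul]
    exact horth _ (pow_mulVec_mem_krylov _ b (by omega))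
  · calc (A ^ (2 * j + 1) *ᵥ b) ⬝ᵥ (b - A *ᵥ xE)
        = (A ^ (2 * j + 1) *ᵥ b) ⬝ᵥ (A ^ 0 *ᵥ b) + (A ^ (2 * j + 1 + 1) *ᵥ b) ⬝ᵥ xE := by
          rw [dotProduct_sub, dotProduct_mulVec_of_transpose_eq_neg hA, mulVec_mulVec,
            ← pow_succ', pow_zero, one_mulVec, sub_neg_eq_add]
      _ = 0 + 0 := congrArg₂ (· + ·)
          (pow_mulVec_dotProduct_pow_mulVec_eq_zero_of_odd hA b ⟨j, rfl⟩)
          (pow_even_mulVec_dotProduct_eq_zero_of_mem_krylov_sq hA hxE (j + 1))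
      _ = 0 := add_zero 0
end

section
/- Let A be real skew-symmetric and nonsingular. The minimum residual iterates x^M_m := argmin over z ∈ K_m(A,b) of ‖b - Az‖ satisfy x^M_{2q+1} = x^M_{2q}, i.e., odd iterates equal the preceding even iterates (the minimizer over K_{2q+1}(A,b) lies in K_{2q}(A,b)). -/
open Matrix

/-!
If `Aᵀ = -A`, then `⟪A ^ i b, A ^ k b⟫ = (-1) ^ i ⟪b, A ^ (i + k) b⟫` vanishes whenever `i + k`
is odd, so the even and odd powers of `A` applied to `b` span orthogonal subspaces. Split
`z ∈ K_{2q+1}` into its even-power part `zₑ` and odd-power part `zₒ ∈ K_{2q}`: the residual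
`b - A z = (b - A zₒ) - A zₑ` is then an orthogonal sum, so `‖b - A zₒ‖ ≤ ‖b - A z‖`. Hence the
minimizer over `K_{2q}` also minimizes over `K_{2q+1}`, and the minimizer is unique because `A`
is injective and the Euclidean norm is strictly convex.
-/

open scoped RealInnerProductSpace
open WithLp

section OrbitSpan

variable {R M : Type*} [CommSemiring R] [AddCommMonoid M] [Module R M]
  (T : Module.End R M) (b : M)

/-- `orbitSpan T b (Set.Iio m)` is the Krylov space `K_m(T, b)`. -/
def orbitSpan (s : Set ℕ) : Submodule R M :=
  Submodule.span R ((fun k => (T ^ k) b) '' s)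

variable {T b}

theorem orbitSpan_mono {s t : Set ℕ} (h : s ⊆ t) : orbitSpan T b s ≤ orbitSpan T b t :=
  Submodule.span_mono (Set.image_mono h)

theorem orbitSpan_union (s t : Set ℕ) :
    orbitSpan T b (s ∪ t) = orbitSpan T b s ⊔ orbitSpan T b t := by
  rw [orbitSpan, Set.image_union, Submodule.span_union]; rfl

theorem self_mem_orbitSpan {s : Set ℕ} (h : 0 ∈ s) : b ∈ orbitSpan T b s :=
  Submodule.subset_span ⟨0, h, by simp⟩

theorem map_orbitSpan (s : Set ℕ) :
    (orbitSpan T b s).map T = orbitSpan T b ((· + 1) '' s) := by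
  rw [orbitSpan, orbitSpan, Submodule.map_span, Set.image_image, Set.image_image]
  simp only [pow_succ', Module.End.mul_apply]

theorem apply_mem_orbitSpan {s t : Set ℕ} (hst : (· + 1) '' s ⊆ t) {x : M}
    (hx : x ∈ orbitSpan T b s) : T x ∈ orbitSpan T b t :=
  orbitSpan_mono hst (map_orbitSpan (T := T) s ▸ Submodule.mem_map_of_mem hx)

end OrbitSpan

theorem Nat.Iio_two_mul_add_one_subset (q : ℕ) :
    Set.Iio (2 * q + 1) ⊆ {k | Even k} ∪ (Set.Iio (2 * q) ∩ {k | Odd k}) := by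
  intro k hk
  rcases Nat.even_or_odd k with he | ho
  · exact Or.inl he
  · refine Or.inr ⟨lt_of_le_of_ne (Nat.lt_succ_iff.mp hk) ?_, ho⟩
    rintro rfl
    exact Nat.not_odd_iff_even.mpr (even_two_mul q) ho

section SkewSymmetric

variable {E : Type*} [NormedAddCommGroup E] [InnerProductSpace ℝ E]

def LinearMap.IsSkewSymmetric (T : E →ₗ[ℝ] E) : Prop :=
  ∀ x y, ⟪T x, y⟫ = -⟪x, T y⟫

variable {T : E →ₗ[ℝ] E}

theorem LinearMap.IsSkewSymmetric.inner_pow_apply_left (hT : T.IsSkewSymmetric) (i : ℕ)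
    (x y : E) : ⟪(T ^ i) x, y⟫ = (-1) ^ i * ⟪x, (T ^ i) y⟫ := by
  induction i generalizing x with
  | zero => simp
  | succ i ih =>
    rw [pow_succ, Module.End.mul_apply, ih, hT, pow_mul_comm', Module.End.mul_apply]
    ring

theorem LinearMap.IsSkewSymmetric.inner_pow_apply_pow_apply_eq_zero (hT : T.IsSkewSymmetric)
    (b : E) {i k : ℕ} (h : Odd (i + k)) : ⟪(T ^ i) b, (T ^ k) b⟫ = 0 := by
  have hself : ⟪b, (T ^ (i + k)) b⟫ = -⟪b, (T ^ (i + k)) b⟫ := by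
    conv_lhs => rw [real_inner_comm, hT.inner_pow_apply_left, h.neg_one_pow]
    ring
  rw [hT.inner_pow_apply_left, ← Module.End.mul_apply, ← pow_add, self_eq_neg.mp hself,
    mul_zero]

theorem LinearMap.IsSkewSymmetric.orbitSpan_even_isOrtho_odd (hT : T.IsSkewSymmetric) (b : E) :
    orbitSpan T b {k | Even k} ⟂ orbitSpan T b {k | Odd k} := by
  rw [orbitSpan, orbitSpan, Submodule.isOrtho_span]
  rintro _ ⟨i, hi, rfl⟩ _ ⟨k, hk, rfl⟩
  exact hT.inner_pow_apply_pow_apply_eq_zero b (hi.add_odd hk)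

theorem LinearMap.IsSkewSymmetric.exists_mem_orbitSpan_norm_sub_le (hT : T.IsSkewSymmetric)
    (b : E) {q : ℕ} {z : E} (hz : z ∈ orbitSpan T b (Set.Iio (2 * q + 1))) :
    ∃ z' ∈ orbitSpan T b (Set.Iio (2 * q)), ‖b - T z'‖ ≤ ‖b - T z‖ := by
  obtain ⟨ze, hze, zo, hzo, rfl⟩ := Submodule.mem_sup.mp <|
    orbitSpan_union (T := T) (b := b) _ _ ▸ orbitSpan_mono (Nat.Iio_two_mul_add_one_subset q) hz
  refine ⟨zo, orbitSpan_mono Set.inter_subset_left hzo, ?_⟩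
  have hodd_even : (· + 1) '' {k : ℕ | Odd k} ⊆ {k | Even k} :=
    Set.image_subset_iff.mpr fun _ hk => hk.add_one
  have heven_odd : (· + 1) '' {k : ℕ | Even k} ⊆ {k | Odd k} :=
    Set.image_subset_iff.mpr fun _ hk => hk.add_one
  have hres : b - T zo ∈ orbitSpan T b {k | Even k} :=
    Submodule.sub_mem _ (self_mem_orbitSpan Even.zero)
      (apply_mem_orbitSpan hodd_even (orbitSpan_mono Set.inter_subset_right hzo))
  have horth : ⟪b - T zo, T ze⟫ = 0 :=
    (hT.orbitSpan_even_isOrtho_odd b).inner_eq hres (apply_mem_orbitSpan heven_odd hze)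
  have hsplit : b - T (ze + zo) = (b - T zo) - T ze := by rw [map_add]; abel
  rw [hsplit, mul_self_le_mul_self_iff (norm_nonneg _) (norm_nonneg _),
    norm_sub_sq_eq_norm_sq_add_norm_sq_real horth]
  exact le_add_of_nonneg_right (mul_self_nonneg _)

theorem LinearMap.IsSkewSymmetric.isMinOn_norm_sub_orbitSpan_two_mul_add_one
    (hT : T.IsSkewSymmetric) (b : E) {q : ℕ} {x : E}
    (hx : IsMinOn (fun z => ‖b - T z‖) (orbitSpan T b (Set.Iio (2 * q))) x) :
    IsMinOn (fun z => ‖b - T z‖) (orbitSpan T b (Set.Iio (2 * q + 1))) x := by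
  intro z hz
  obtain ⟨z', hz', hle⟩ := hT.exists_mem_orbitSpan_norm_sub_le b hz
  exact (hx hz').trans hle

end SkewSymmetric

theorem eq_of_isMinOn_norm_sub {E F : Type*} [AddCommGroup E] [Module ℝ E]
    [NormedAddCommGroup F] [NormedSpace ℝ F] [StrictConvexSpace ℝ F]
    {T : E →ₗ[ℝ] F} (hT : Function.Injective T) {s : Set E} (hs : Convex ℝ s) (b : F)
    {x y : E} (hx : x ∈ s) (hy : y ∈ s) (hxmin : IsMinOn (fun z => ‖b - T z‖) s x)
    (hymin : IsMinOn (fun z => ‖b - T z‖) s y) : x = y := by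
  by_contra hne
  set z := (2⁻¹ : ℝ) • x + (2⁻¹ : ℝ) • y
  have hz : z ∈ s := hs hx hy (by norm_num) (by norm_num) (by norm_num)
  have hres : b - T z = (2⁻¹ : ℝ) • (b - T x) + (2⁻¹ : ℝ) • (b - T y) := by
    simp only [z, map_add, map_smul]
    module
  have hlt : ‖b - T z‖ < ‖b - T x‖ := by
    rw [hres]
    exact norm_combo_lt_of_ne le_rfl (hymin hx) (fun h => hne (hT (sub_right_injective h)))
      (by norm_num) (by norm_num) (by norm_num)
  exact (hxmin hz).not_gt hlt

section Matrix

theorem Matrix.isSkewSymmetric_toEuclideanLin {ι : Type*} [Fintype ι] [DecidableEq ι]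
    {A : Matrix ι ι ℝ} (hA : Aᵀ = -A) : (toEuclideanLin A).IsSkewSymmetric := fun x y => by
  rw [← LinearMap.adjoint_inner_right, ← toEuclideanLin_conjTranspose_eq_adjoint,
    conjTranspose_eq_transpose_of_trivial, hA, map_neg, LinearMap.neg_apply, inner_neg_right]

theorem Matrix.toEuclideanLin_injective {ι : Type*} [Fintype ι] [DecidableEq ι]
    {A : Matrix ι ι ℝ} (hA : A.det ≠ 0) : Function.Injective (toEuclideanLin A) :=
  fun _ _ h => (WithLp.linearEquiv 2 ℝ (ι → ℝ)).injective <|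
    mulVec_injective_iff_isUnit.mpr ((isUnit_iff_isUnit_det A).mpr hA.isUnit) congr(ofLp $h)

variable {n : ℕ} (A : Matrix (Fin n) (Fin n) ℝ)

theorem mem_krylov_iff (b x : Fin n → ℝ) (m : ℕ) :
    x ∈ krylov A b m ↔ toLp 2 x ∈ orbitSpan (toEuclideanLin A) (toLp 2 b) (Set.Iio m) := by
  have hspan : orbitSpan (toEuclideanLin A) (toLp 2 b) (Set.Iio m) =
      (krylov A b m).map (WithLp.linearEquiv 2 ℝ (Fin n → ℝ)).symm.toLinearMap := by
    rw [orbitSpan, krylov, Submodule.map_span, Set.image_image]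
    congr 2 with k
    rw [← toLpLin_pow, toLpLin_toLp, toLin'_apply]
    rfl
  rw [hspan, Submodule.mem_map_equiv]
  rfl

theorem enorm_sub_mulVec (b z : Fin n → ℝ) :
    _root_.enorm (b - A *ᵥ z) = ‖toLp 2 b - toEuclideanLin A (toLp 2 z)‖ := by
  simp [_root_.enorm, EuclideanSpace.norm_eq]

theorem isMinOn_norm_sub_toEuclideanLin {b x : Fin n → ℝ} {m : ℕ}
    (h : ∀ z ∈ krylov A b m, _root_.enorm (b - A *ᵥ x) ≤ _root_.enorm (b - A *ᵥ z)) :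
    IsMinOn (fun z => ‖toLp 2 b - toEuclideanLin A z‖)
      (orbitSpan (toEuclideanLin A) (toLp 2 b) (Set.Iio m)) (toLp 2 x) := by
  intro z hz
  have := h (ofLp z) ((mem_krylov_iff A b (ofLp z) m).mpr hz)
  rwa [enorm_sub_mulVec, enorm_sub_mulVec] at this

end Matrix

theorem minres_odd_eq_even {n : ℕ} (A : Matrix (Fin n) (Fin n) ℝ)
    (hA : Aᵀ = -A) (hdet : A.det ≠ 0) (b xM1 xM0 : Fin n → ℝ) (q : ℕ)
    (hxM1 : xM1 ∈ krylov A b (2 * q + 1))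
    (hmin1 : ∀ z ∈ krylov A b (2 * q + 1), _root_.enorm (b - A *ᵥ xM1) ≤ _root_.enorm (b - A *ᵥ z))
    (hxM0 : xM0 ∈ krylov A b (2 * q))
    (hmin0 : ∀ z ∈ krylov A b (2 * q), _root_.enorm (b - A *ᵥ xM0) ≤ _root_.enorm (b - A *ᵥ z)) :
    xM1 = xM0 := by
  rw [mem_krylov_iff] at hxM1 hxM0
  have hxM0' := orbitSpan_mono (Set.Iio_subset_Iio (Nat.le_succ _)) hxM0
  have hmin0' := (isSkewSymmetric_toEuclideanLin hA).isMinOn_norm_sub_orbitSpan_two_mul_add_one _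
    (isMinOn_norm_sub_toEuclideanLin A hmin0)
  exact toLp_injective 2 <| eq_of_isMinOn_norm_sub (toEuclideanLin_injective hdet)
    (Submodule.convex _) _ hxM1 hxM0' (isMinOn_norm_sub_toEuclideanLin A hmin1) hmin0'
end

section
/- Let A be real skew-symmetric with Ax = b. Suppose z = z_e + z_o with z_e ∈ K_{q_e}(A², b) and z_o ∈ K_{q_o}(A², Ab). Then ‖b - Az‖² = ‖b - Az_o‖² + ‖Az_e‖². -/
/-!
Skew-symmetry gives `⟪Aⁱ b, Aʲ b⟫ = (-1)ⁱ ⟪b, Aⁱ⁺ʲ b⟫`, and `⟪b, Aᵐ b⟫ = -⟪b, Aᵐ b⟫ = 0` for odd `m`,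
so odd and even powers of `A` applied to `b` span orthogonal subspaces. Now `A z_e` lies in the odd one
and `b - A z_o` in the even one, and `b - A z = (b - A z_o) - A z_e` is an orthogonal decomposition.
-/

open Matrix

noncomputable def euclidNorm {n : ℕ} (v : Fin n → ℝ) : ℝ := Real.sqrt (∑ i, v i ^ 2)

section SkewSymmetric

variable {ι R : Type*} [Fintype ι] [DecidableEq ι] [CommRing R] [IsAddTorsionFree R]
  {A : Matrix ι ι R} {v : ι → R}

theorem dotProduct_pow_mulVec_self_of_odd (hA : Aᵀ = -A) {m : ℕ} (hm : Odd m) :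
    v ⬝ᵥ (A ^ m *ᵥ v) = 0 := by
  have hskew : v ⬝ᵥ (A ^ m *ᵥ v) = -(v ⬝ᵥ (A ^ m *ᵥ v)) := by
    conv_lhs => rw [dotProduct_mulVec, ← mulVec_transpose, transpose_pow, hA, hm.neg_pow,
      neg_mulVec, neg_dotProduct, dotProduct_comm]
  exact self_eq_neg.mp hskew

theorem pow_mulVec_dotProduct_pow_mulVec_of_odd_add (hA : Aᵀ = -A) {i j : ℕ} (hij : Odd (i + j)) :
    (A ^ i *ᵥ v) ⬝ᵥ (A ^ j *ᵥ v) = 0 := by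
  rw [← vecMul_transpose, ← dotProduct_mulVec, mulVec_mulVec, transpose_pow, hA]
  rcases Nat.even_or_odd i with hi | hi
  · rw [hi.neg_pow, ← pow_add, dotProduct_pow_mulVec_self_of_odd hA hij]
  · rw [hi.neg_pow, neg_mul, neg_mulVec, dotProduct_neg, ← pow_add,
      dotProduct_pow_mulVec_self_of_odd hA hij, neg_zero]

theorem dotProduct_eq_zero_of_mem_span_odd_of_mem_span_even (hA : Aᵀ = -A) {u w : ι → R}
    (hu : u ∈ Submodule.span R ((fun k => A ^ k *ᵥ v) '' {k | Odd k}))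
    (hw : w ∈ Submodule.span R ((fun k => A ^ k *ᵥ v) '' {k | Even k})) :
    u ⬝ᵥ w = 0 := by
  induction hu, hw using Submodule.span_induction₂ with
  | mem_mem _ _ hu hw =>
    obtain ⟨i, hi, rfl⟩ := hu
    obtain ⟨j, hj, rfl⟩ := hw
    exact pow_mulVec_dotProduct_pow_mulVec_of_odd_add hA (Nat.odd_add.mpr (iff_of_true hi hj))
  | zero_left => exact zero_dotProduct _
  | zero_right => exact dotProduct_zero _
  | add_left _ _ _ _ _ _ h₁ h₂ => rw [add_dotProduct, h₁, h₂, add_zero]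
  | add_right _ _ _ _ _ _ h₁ h₂ => rw [dotProduct_add, h₁, h₂, add_zero]
  | smul_left _ _ _ _ _ h => rw [smul_dotProduct, h, smul_zero]
  | smul_right _ _ _ _ _ h => rw [dotProduct_smul, h, smul_zero]

end SkewSymmetric

theorem euclidNorm_sq {n : ℕ} (v : Fin n → ℝ) : euclidNorm v ^ 2 = v ⬝ᵥ v := by
  rw [euclidNorm, Real.sq_sqrt (Finset.sum_nonneg fun i _ => sq_nonneg _)]
  simp only [dotProduct, sq]

theorem euclidNorm_sub_sq_of_dotProduct_eq_zero {n : ℕ} {u w : Fin n → ℝ} (h : u ⬝ᵥ w = 0) :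
    euclidNorm (u - w) ^ 2 = euclidNorm u ^ 2 + euclidNorm w ^ 2 := by
  rw [euclidNorm_sq, euclidNorm_sq, euclidNorm_sq, sub_dotProduct, dotProduct_sub, dotProduct_sub,
    dotProduct_comm w u, h]
  ring

theorem mulVec_mem_span_of_mem_krylov {n : ℕ} {A : Matrix (Fin n) (Fin n) ℝ} {w z : Fin n → ℝ}
    {q : ℕ} (hz : z ∈ krylov (A ^ 2) w q) :
    A *ᵥ z ∈ Submodule.span ℝ ((fun k => A ^ (2 * k + 1) *ᵥ w) '' Set.Iio q) := by
  have hmap := Submodule.mem_map_of_mem (f := A.mulVecLin) hz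
  rw [krylov, Submodule.map_span, Set.image_image] at hmap
  simpa only [mulVecLin_apply, mulVec_mulVec, ← pow_mul, ← pow_succ'] using hmap

theorem residual_pythagorean_general {n : ℕ} (A : Matrix (Fin n) (Fin n) ℝ)
    (hA : Aᵀ = -A) (b z ze zo : Fin n → ℝ) (qe qo : ℕ)
    (hz : z = ze + zo)
    (hze : ze ∈ krylov (A ^ 2) b qe) (hzo : zo ∈ krylov (A ^ 2) (A *ᵥ b) qo) :
    euclidNorm (b - A *ᵥ z) ^ 2 = euclidNorm (b - A *ᵥ zo) ^ 2 + euclidNorm (A *ᵥ ze) ^ 2 := by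
  have hodd : A *ᵥ ze ∈ Submodule.span ℝ ((fun k => A ^ k *ᵥ b) '' {k | Odd k}) := by
    refine Submodule.span_mono ?_ (mulVec_mem_span_of_mem_krylov hze)
    rintro _ ⟨k, -, rfl⟩
    exact ⟨2 * k + 1, odd_two_mul_add_one k, rfl⟩
  have heven : b - A *ᵥ zo ∈ Submodule.span ℝ ((fun k => A ^ k *ᵥ b) '' {k | Even k}) := by
    refine sub_mem (Submodule.subset_span ⟨0, Even.zero, one_mulVec b⟩) ?_
    refine Submodule.span_mono ?_ (mulVec_mem_span_of_mem_krylov hzo)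
    rintro _ ⟨k, -, rfl⟩
    exact ⟨2 * k + 2, ⟨k + 1, by ring⟩, by simp only [mulVec_mulVec, ← pow_succ]⟩
  have hsplit : b - A *ᵥ z = (b - A *ᵥ zo) - A *ᵥ ze := by
    rw [hz, mulVec_add]
    abel
  rw [hsplit]
  exact euclidNorm_sub_sq_of_dotProduct_eq_zero <|
    (dotProduct_comm _ _).trans (dotProduct_eq_zero_of_mem_span_odd_of_mem_span_even hA hodd heven)

theorem residual_pythagorean {n : ℕ} (A : Matrix (Fin n) (Fin n) ℝ)
    (hA : Aᵀ = -A) (b x z ze zo : Fin n → ℝ) (qe qo : ℕ)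
    (hx : A *ᵥ x = b) (hz : z = ze + zo)
    (hze : ze ∈ krylov (A ^ 2) b qe) (hzo : zo ∈ krylov (A ^ 2) (A *ᵥ b) qo) :
    euclidNorm (b - A *ᵥ z) ^ 2 = euclidNorm (b - A *ᵥ zo) ^ 2 + euclidNorm (A *ᵥ ze) ^ 2 :=
  residual_pythagorean_general A hA b z ze zo qe qo hz hze hzo
end
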